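/- Assume in addition that ν is finite and nonzero, and let p̄ be the unique solution in (max(p̲,−1), ∞) of Φ(q) = (q+1)Φ′(q). Then for every γ > 1 and every q with max(p̲,−1) < q < p̄, there exists α ∈ (1, γ) such that Φ(α(q+1) − 1) > α Φ(q). -/

import Mathlib

open MeasureTheory Real Set Filter

noncomputable section

/-- Real power with the convention `0 ^ r = 0` for every exponent `r`. -/
def pw (x r : ℝ) : ℝ := if x = 0 then 0 else x ^ r

/-- The state space `S` of ranked mass configurations: nonincreasing nonnegative
sequences with total sum at most `1` (sum condition stated via partial sums). -/
def inS (s : ℕ → ℝ) : Prop :=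
  (∀ i, 0 ≤ s i) ∧ (∀ i, s (i + 1) ≤ s i) ∧ ∀ F : Finset ℕ, ∑ i ∈ F, s i ≤ 1

/-- The configuration `(1, 0, 0, …)`. -/
def oneConf : ℕ → ℝ := fun i => if i = 0 then 1 else 0

/-- A dislocation measure: a measure on sequences, carried by `S`, giving no mass
to `(1,0,…)`, integrating `1 - s₁`, and conserving total mass (carried by
configurations with `Σ sᵢ = 1`). -/
structure IsDislocation (ν : Measure (ℕ → ℝ)) : Prop where
  carried : ν {s | ¬ (inS s ∧ HasSum s 1)} = 0
  no_one : ν {oneConf} = 0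
  int_one_sub : ∫⁻ s, ENNReal.ofReal (1 - s 0) ∂ν < ⊤

/-- `p̲ := inf {p ∈ ℝ : ∫_S Σ_{i≥2} sᵢ^{p+1} ν(ds) < ∞}`, as an extended real
(possibly `-∞`, and `+∞` if no `p` qualifies). -/
def pLow (ν : Measure (ℕ → ℝ)) : EReal :=
  sInf {x : EReal | ∃ p : ℝ, x = (p : EReal) ∧
    ∫⁻ s, ∑' i, ENNReal.ofReal (pw (s (i + 1)) (p + 1)) ∂ν < ⊤}

/-- `Φ(q) := ∫_S (1 - Σ_{i≥1} sᵢ^{q+1}) ν(ds)`. -/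
def Phi (ν : Measure (ℕ → ℝ)) (q : ℝ) : ℝ :=
  ∫ s, (1 - ∑' i, pw (s i) (q + 1)) ∂ν

/-!
Write `Ψ(q) = (q + 1) Φ'(q) - Φ(q)`. Each `q ↦ sᵢ^(q+1)` is convex, so `Φ` is concave on
`(max(p, -1), ∞)` as soon as `∫ Σ_{i≥2} sᵢ^(p+1) dν < ∞`, and it is differentiable there by
dominated convergence, thanks to `|t^r log t| ≤ δ⁻¹ t^(r-δ)` on `[0, 1]`. As `-Ψ(q)` is the value
at `-1` of the tangent to `Φ` at `q`, concavity makes `Ψ` antitone, so `Ψ(q) ≥ Ψ(p̄) = 0`, and the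
uniqueness of `p̄` makes this strict. Finally `Ψ(q)` is the derivative at `α = 1` of
`α ↦ Φ(α(q+1) - 1) - α Φ(q)`, which vanishes at `α = 1`, hence is positive just right of `1`.
-/

lemma pw_zero_left (r : ℝ) : pw 0 r = 0 := if_pos rfl

lemma pw_of_pos {x : ℝ} (hx : 0 < x) (r : ℝ) : pw x r = x ^ r := if_neg hx.ne'

lemma pw_nonneg {x : ℝ} (hx : 0 ≤ x) (r : ℝ) : 0 ≤ pw x r := by
  rcases hx.eq_or_lt with rfl | hx
  · rw [pw_zero_left]
  · rw [pw_of_pos hx]; exact rpow_nonneg hx.le r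

lemma measurable_pw (r : ℝ) : Measurable fun x => pw x r :=
  Measurable.ite (measurableSet_singleton 0) measurable_const (measurable_id.pow_const r)

lemma pw_le_one {t r : ℝ} (h0 : 0 ≤ t) (h1 : t ≤ 1) (hr : 0 ≤ r) : pw t r ≤ 1 := by
  rcases h0.eq_or_lt with rfl | ht
  · rw [pw_zero_left]; exact zero_le_one
  · rw [pw_of_pos ht]; exact rpow_le_one h0 h1 hr

lemma pw_le_pw_of_exponent_ge {t a b : ℝ} (h0 : 0 ≤ t) (h1 : t ≤ 1) (hab : a ≤ b) :
    pw t b ≤ pw t a := by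
  rcases h0.eq_or_lt with rfl | ht
  · simp only [pw_zero_left, le_refl]
  · rw [pw_of_pos ht, pw_of_pos ht]; exact rpow_le_rpow_of_exponent_ge ht h1 hab

lemma pw_left_eq_rpow {t : ℝ} (ht : 0 < t) : pw t = fun r => t ^ r := funext (pw_of_pos ht)

lemma convexOn_pw {t : ℝ} (h0 : 0 ≤ t) : ConvexOn ℝ univ (pw t) := by
  rcases h0.eq_or_lt with rfl | ht
  · rw [show pw 0 = 0 from funext pw_zero_left]; exact convexOn_const 0 convex_univ
  · rw [pw_left_eq_rpow ht]; exact convexOn_rpow_left ht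

lemma hasDerivAt_pw {t : ℝ} (h0 : 0 ≤ t) (r : ℝ) : HasDerivAt (pw t) (pw t r * log t) r := by
  rcases h0.eq_or_lt with rfl | ht
  · rw [show pw 0 = 0 from funext pw_zero_left, Pi.zero_apply, zero_mul]; exact hasDerivAt_const r 0
  · rw [pw_left_eq_rpow ht]; exact (hasStrictDerivAt_const_rpow ht r).hasDerivAt

lemma norm_pw_mul_log_le {t r₀ r δ : ℝ} (h0 : 0 ≤ t) (h1 : t ≤ 1) (hδ : 0 < δ)
    (hr : r₀ + δ ≤ r) : ‖pw t r * log t‖ ≤ δ⁻¹ * pw t r₀ := by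
  rcases h0.eq_or_lt with rfl | ht
  · simp only [pw_zero_left, zero_mul, norm_zero, mul_zero, le_refl]
  have hlog : -log t ≤ t ^ (-δ) / δ := by
    simpa only [log_inv, inv_rpow h0, ← rpow_neg h0] using log_le_rpow_div (inv_nonneg.2 h0) hδ
  rw [pw_of_pos ht, pw_of_pos ht, Real.norm_eq_abs, abs_mul, abs_of_nonneg (rpow_nonneg h0 r),
    abs_of_nonpos (log_nonpos h0 h1)]
  calc t ^ r * -log t ≤ t ^ r * (t ^ (-δ) / δ) := by gcongr
    _ = δ⁻¹ * t ^ (r - δ) := by rw [sub_eq_add_neg, rpow_add ht]; ring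
    _ ≤ δ⁻¹ * t ^ r₀ :=
      mul_le_mul_of_nonneg_left (rpow_le_rpow_of_exponent_ge ht h1 (by linarith)) (by positivity)

section Configuration

variable {s : ℕ → ℝ} {r₀ : ℝ} (hs : ∀ i, s i ∈ Icc 0 1) (hsum : Summable fun i => pw (s i) r₀)
include hs hsum

lemma summable_pw_of_le {r : ℝ} (hr : r₀ ≤ r) : Summable fun i => pw (s i) r :=
  hsum.of_nonneg_of_le (fun i => pw_nonneg (hs i).1 r)
    fun i => pw_le_pw_of_exponent_ge (hs i).1 (hs i).2 hr

lemma tsum_pw_le_one_add {r : ℝ} (hr₀ : r₀ ≤ r) (hr : 0 ≤ r) :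
    ∑' i, pw (s i) r ≤ 1 + ∑' i, pw (s (i + 1)) r₀ := by
  have hsum_r : Summable fun i => pw (s (i + 1)) r :=
    (summable_nat_add_iff (f := fun i => pw (s i) r) 1).2 (summable_pw_of_le hs hsum hr₀)
  have hsum_r₀ : Summable fun i => pw (s (i + 1)) r₀ :=
    (summable_nat_add_iff (f := fun i => pw (s i) r₀) 1).2 hsum
  have h_tail : ∑' i, pw (s (i + 1)) r ≤ ∑' i, pw (s (i + 1)) r₀ := Summable.tsum_le_tsum
    (fun i => pw_le_pw_of_exponent_ge (hs (i + 1)).1 (hs (i + 1)).2 hr₀) hsum_r hsum_r₀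
  rw [(summable_pw_of_le hs hsum hr₀).tsum_eq_zero_add]
  exact add_le_add (pw_le_one (hs 0).1 (hs 0).2 hr) h_tail

lemma convexOn_tsum_pw : ConvexOn ℝ (Ici r₀) fun r => ∑' i, pw (s i) r := by
  refine ⟨convex_Ici r₀, fun x hx y hy a b ha hb hab => ?_⟩
  have hx' := (summable_pw_of_le hs hsum hx).const_smul a
  have hy' := (summable_pw_of_le hs hsum hy).const_smul b
  calc ∑' i, pw (s i) (a • x + b • y)
      ≤ ∑' i, (a • pw (s i) x + b • pw (s i) y) :=
        Summable.tsum_le_tsum (fun i => (convexOn_pw (hs i).1).2 trivial trivial ha hb hab)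
          (summable_pw_of_le hs hsum (convex_Ici r₀ hx hy ha hb hab)) (hx'.add hy')
    _ = a • ∑' i, pw (s i) x + b • ∑' i, pw (s i) y := by
        rw [Summable.tsum_add hx' hy', tsum_const_smul'', tsum_const_smul'']

lemma norm_tsum_pw_mul_log_le {r δ : ℝ} (hδ : 0 < δ) (hr : r₀ + δ ≤ r) :
    ‖∑' i, pw (s i) r * log (s i)‖ ≤ δ⁻¹ * ∑' i, pw (s i) r₀ :=
  tsum_of_norm_bounded (hsum.hasSum.mul_left δ⁻¹)
    fun i => norm_pw_mul_log_le (hs i).1 (hs i).2 hδ hr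

lemma hasDerivAt_tsum_pw {r : ℝ} (hr : r₀ < r) :
    HasDerivAt (fun r => ∑' i, pw (s i) r) (∑' i, pw (s i) r * log (s i)) r := by
  set δ := (r - r₀) / 2
  have hδ : 0 < δ := by positivity
  have hrδ : r ∈ Ioi (r₀ + δ) := by simp only [mem_Ioi, δ]; linarith
  exact hasDerivAt_tsum_of_isPreconnected (hsum.mul_left δ⁻¹) isOpen_Ioi isPreconnected_Ioi
    (fun i y _ => hasDerivAt_pw (hs i).1 y)
    (fun i y hy => norm_pw_mul_log_le (hs i).1 (hs i).2 hδ (le_of_lt hy)) hrδ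
    (summable_pw_of_le hs hsum hr.le) hrδ

end Configuration

lemma concaveOn_integral {α E : Type*} [MeasurableSpace α] {μ : Measure α} [AddCommGroup E]
    [Module ℝ E] {S : Set E} {F : E → α → ℝ} (hS : Convex ℝ S)
    (hF : ∀ᵐ a ∂μ, ConcaveOn ℝ S (F · a)) (hint : ∀ x ∈ S, Integrable (F x) μ) :
    ConcaveOn ℝ S fun x => ∫ a, F x a ∂μ := by
  refine ⟨hS, fun x hx y hy a b ha hb hab => ?_⟩
  simp only [smul_eq_mul]
  rw [← integral_const_mul, ← integral_const_mul,
    ← integral_add ((hint x hx).const_mul a) ((hint y hy).const_mul b)]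
  refine integral_mono_ae (((hint x hx).const_mul a).add ((hint y hy).const_mul b))
    (hint _ (hS hx hy ha hb hab)) ?_
  filter_upwards [hF] with s hs using hs.2 hx hy ha hb hab

lemma IsDislocation.ae_mem_Icc {ν : Measure (ℕ → ℝ)} (hν : IsDislocation ν) :
    ∀ᵐ s ∂ν, ∀ i, s i ∈ Icc 0 1 := by
  filter_upwards [ae_iff.2 hν.carried] with s hs i
  exact ⟨hs.1.1 i, by simpa using hs.1.2.2 {i}⟩

section Phi

variable {ν : Measure (ℕ → ℝ)} {p : ℝ} (hS : ∀ᵐ s ∂ν, ∀ i, s i ∈ Icc 0 1)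
  (hp : ∫⁻ s, ∑' i, ENNReal.ofReal (pw (s (i + 1)) (p + 1)) ∂ν ≠ ⊤)
include hS hp

lemma ae_summable_pw : ∀ᵐ s ∂ν, Summable fun i => pw (s i) (p + 1) := by
  have hm : Measurable fun s : ℕ → ℝ => ∑' i, ENNReal.ofReal (pw (s (i + 1)) (p + 1)) :=
    Measurable.tsum fun i => ((measurable_pw _).comp (measurable_pi_apply _)).ennreal_ofReal
  filter_upwards [ae_lt_top hm hp, hS] with s hfin hs
  rw [← summable_nat_add_iff (f := fun i => pw (s i) (p + 1)) 1]
  simpa only [ENNReal.toReal_ofReal (pw_nonneg (hs _).1 _)] using ENNReal.summable_toReal hfin.ne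

lemma integrable_tsum_pw_succ : Integrable (fun s => ∑' i, pw (s (i + 1)) (p + 1)) ν := by
  have hm : Measurable fun s : ℕ → ℝ => ∑' i, pw (s (i + 1)) (p + 1) :=
    Measurable.tsum fun i => (measurable_pw _).comp (measurable_pi_apply _)
  refine (lintegral_ofReal_ne_top_iff_integrable hm.aestronglyMeasurable ?_).1 ?_
  · filter_upwards [hS] with s hs using tsum_nonneg fun i => pw_nonneg (hs _).1 _
  · convert hp using 1
    refine lintegral_congr_ae ?_
    filter_upwards [hS, ae_summable_pw hS hp] with s hs hsum
    exact ENNReal.ofReal_tsum_of_nonneg (fun i => pw_nonneg (hs _).1 _)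
      ((summable_nat_add_iff (f := fun i => pw (s i) (p + 1)) 1).2 hsum)

lemma integrable_tsum_pw [IsFiniteMeasure ν] {q : ℝ} (hpq : p ≤ q) (hq : -1 ≤ q) :
    Integrable (fun s => ∑' i, pw (s i) (q + 1)) ν := by
  have hm : Measurable fun s : ℕ → ℝ => ∑' i, pw (s i) (q + 1) :=
    Measurable.tsum fun i => (measurable_pw _).comp (measurable_pi_apply i)
  refine Integrable.mono' (g := fun s => 1 + ∑' i, pw (s (i + 1)) (p + 1))
    ((integrable_const 1).add (integrable_tsum_pw_succ hS hp)) hm.aestronglyMeasurable ?_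
  filter_upwards [hS, ae_summable_pw hS hp] with s hs hsum
  rw [Real.norm_of_nonneg (tsum_nonneg fun i => pw_nonneg (hs i).1 _)]
  exact tsum_pw_le_one_add hs hsum (by linarith) (by linarith)

lemma concaveOn_Phi [IsFiniteMeasure ν] : ConcaveOn ℝ (Ioi (max p (-1))) (Phi ν) := by
  refine concaveOn_integral (convex_Ioi _) ?_ fun q hq =>
    (integrable_const 1).sub (integrable_tsum_pw hS hp (le_max_left _ _ |>.trans hq.out.le)
      (le_max_right _ _ |>.trans hq.out.le))
  filter_upwards [hS, ae_summable_pw hS hp] with s hs hsum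
  have h := (((convexOn_tsum_pw hs hsum).translate_left 1).neg.add_const 1).subset
    (fun x hx => ?_) (convex_Ioi (max p (-1)))
  · refine h.congr fun x _ => ?_
    simp only [Pi.add_apply, Pi.neg_apply, Function.comp_apply]
    ring
  · simp only [mem_preimage, mem_Ici]
    linarith [le_max_left p (-1), hx.out]

lemma differentiableAt_Phi [IsFiniteMeasure ν] {q : ℝ} (hq : max p (-1) < q) :
    DifferentiableAt ℝ (Phi ν) q := by
  -- dominated convergence on `Ioi a ∈ 𝓝 q`, with `|t^(x+1) log t| ≤ (a - b)⁻¹ t^(b+1)` there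
  obtain ⟨b, hb, hbq⟩ := exists_between hq
  obtain ⟨a, hba, haq⟩ := exists_between hbq
  rw [max_lt_iff] at hb
  have key := hasDerivAt_integral_of_dominated_loc_of_deriv_le (μ := ν)
    (F := fun x s => 1 - ∑' i, pw (s i) (x + 1))
    (F' := fun x s => -∑' i, pw (s i) (x + 1) * log (s i))
    (bound := fun s => (a - b)⁻¹ * ∑' i, pw (s i) (b + 1)) (Ioi_mem_nhds haq)
    (Eventually.of_forall fun x => (aestronglyMeasurable_const.sub
      (Measurable.tsum fun i => (measurable_pw _).comp (measurable_pi_apply i)).aestronglyMeasurable))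
    ((integrable_const 1).sub (integrable_tsum_pw hS hp (by linarith) (by linarith)))
    (Measurable.tsum fun i => ((measurable_pw _).comp (measurable_pi_apply i)).mul
      (measurable_log.comp (measurable_pi_apply i))).neg.aestronglyMeasurable
    ?_ ((integrable_tsum_pw hS hp hb.1.le hb.2.le).const_mul _) ?_
  · exact key.2.differentiableAt
  · filter_upwards [hS, ae_summable_pw hS hp] with s hs hsum x hx
    rw [norm_neg]
    exact norm_tsum_pw_mul_log_le hs (summable_pw_of_le hs hsum (by linarith)) (sub_pos.2 hba)
      (by linarith [hx.out])
  · filter_upwards [hS, ae_summable_pw hS hp] with s hs hsum x hx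
    exact ((hasDerivAt_tsum_pw hs hsum (by linarith [hx.out])).comp_add_const x 1).const_sub 1

end Phi

lemma ConcaveOn.antitoneOn_add_mul_deriv_sub {f : ℝ → ℝ} {S : Set ℝ} (c : ℝ)
    (hf : ConcaveOn ℝ S f) (hd : ∀ x ∈ S, DifferentiableAt ℝ f x) :
    AntitoneOn (fun x => (x + c) * deriv f x - f x) (S ∩ Ici (-c)) := by
  intro x hx y hy hxy
  rcases hxy.eq_or_lt with rfl | hlt
  · exact le_rfl
  have hslope := hf.deriv_le_slope hx.1 hy.1 hlt (hd y hy.1)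
  rw [slope_def_field, le_div_iff₀ (sub_pos.2 hlt)] at hslope
  have hderiv := mul_le_mul_of_nonneg_left (hf.antitoneOn_deriv hd hx.1 hy.1 hxy)
    (by linarith [hx.2.out] : 0 ≤ x + c)
  dsimp only
  nlinarith

lemma exists_mul_lt_of_hasDerivAt {f : ℝ → ℝ} {f' x γ : ℝ} (hf : HasDerivAt f f' x)
    (hpos : f x < (x + 1) * f') (hγ : 1 < γ) :
    ∃ α, 1 < α ∧ α < γ ∧ α * f x < f (α * (x + 1) - 1) := by
  set G : ℝ → ℝ := fun α => f (α * (x + 1) - 1) - α * f x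
  have hG : HasDerivAt G (f' * (x + 1) - f x) 1 := by
    have hlin : HasDerivAt (fun α : ℝ => α * (x + 1) - 1) (x + 1) 1 := by
      simpa using ((hasDerivAt_id (1 : ℝ)).mul_const (x + 1)).sub_const 1
    exact (hf.comp_of_eq 1 hlin (by ring)).sub (hasDerivAt_mul_const (f x))
  obtain ⟨t, ht_slope, ht⟩ := ((hG.tendsto_slope_zero_right.eventually
    (lt_mem_nhds (by linarith : (0 : ℝ) < f' * (x + 1) - f x))).and
    (Ioo_mem_nhdsGT (sub_pos.2 hγ))).exists
  refine ⟨1 + t, by linarith [ht.1], by linarith [ht.2], ?_⟩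
  have hGt : 0 < G (1 + t) - G 1 := pos_of_mul_pos_right ht_slope (inv_pos.2 ht.1).le
  have hG1 : G 1 = 0 := by simp only [G, one_mul, add_sub_cancel_right, sub_self]
  linarith

theorem exists_alpha_supermultiplicative_general (ν : Measure (ℕ → ℝ))
    (hν : IsDislocation ν) [IsFiniteMeasure ν] (pbar : ℝ)
    (hmem : -1 < pbar ∧ pLow ν < (pbar : EReal))
    (heq : Phi ν pbar = (pbar + 1) * deriv (Phi ν) pbar)
    (huniq : ∀ q : ℝ, -1 < q → pLow ν < (q : EReal) →
      Phi ν q = (q + 1) * deriv (Phi ν) q → q = pbar)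
    (γ : ℝ) (hγ : 1 < γ) (q : ℝ) (hq1 : -1 < q) (hq2 : pLow ν < (q : EReal))
    (hq3 : q < pbar) :
    ∃ α : ℝ, 1 < α ∧ α < γ ∧ α * Phi ν q < Phi ν (α * (q + 1) - 1) := by
  obtain ⟨_, ⟨p, rfl, hp⟩, hpq⟩ := sInf_lt_iff.1 hq2
  rw [EReal.coe_lt_coe_iff] at hpq
  have hS := hν.ae_mem_Icc
  have hqJ : q ∈ Ioi (max p (-1)) := max_lt hpq hq1
  have hpbarJ : pbar ∈ Ioi (max p (-1)) := max_lt (hpq.trans hq3) hmem.1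
  have hd : ∀ x ∈ Ioi (max p (-1)), DifferentiableAt ℝ (Phi ν) x :=
    fun x hx => differentiableAt_Phi hS hp.ne hx
  have hanti : (pbar + 1) * deriv (Phi ν) pbar - Phi ν pbar ≤
      (q + 1) * deriv (Phi ν) q - Phi ν q :=
    (concaveOn_Phi hS hp.ne).antitoneOn_add_mul_deriv_sub 1 hd ⟨hqJ, hq1.le⟩ ⟨hpbarJ, hmem.1.le⟩
      hq3.le
  have hne : Phi ν q ≠ (q + 1) * deriv (Phi ν) q := fun h => hq3.ne (huniq q hq1 hq2 h)
  exact exists_mul_lt_of_hasDerivAt (hd q hqJ).hasDerivAt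
    (lt_of_le_of_ne (by linarith) hne) hγ

/-- Assume `ν` finite and nonzero, and let `p̄` be the unique solution in
`J := (max(p̲,-1), ∞)` of `Φ(q) = (q+1)Φ'(q)`. Then for every `γ > 1` and every
`q` with `max(p̲,-1) < q < p̄`, there exists `α ∈ (1, γ)` with
`Φ(α(q+1) - 1) > α Φ(q)` (i.e. `m(αθ) < m(θ)^α` for `θ = q+1`). -/
theorem exists_alpha_supermultiplicative (ν : Measure (ℕ → ℝ))
    (hν : IsDislocation ν) [IsFiniteMeasure ν] (hν0 : ν ≠ 0) (pbar : ℝ)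
    (hmem : -1 < pbar ∧ pLow ν < (pbar : EReal))
    (heq : Phi ν pbar = (pbar + 1) * deriv (Phi ν) pbar)
    (huniq : ∀ q : ℝ, -1 < q → pLow ν < (q : EReal) →
      Phi ν q = (q + 1) * deriv (Phi ν) q → q = pbar)
    (γ : ℝ) (hγ : 1 < γ) (q : ℝ) (hq1 : -1 < q) (hq2 : pLow ν < (q : EReal))
    (hq3 : q < pbar) :
    ∃ α : ℝ, 1 < α ∧ α < γ ∧ α * Phi ν q < Phi ν (α * (q + 1) - 1) :=
  exists_alpha_supermultiplicative_general ν hν pbar hmem heq huniq γ hγ q hq1 hq2 hq3
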